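/- Let Λ be the Enriques lattice and E₁,…,E₁₀ an isotropic 10-sequence in Λ. For any integers φ₁,…,φ₁₀ with 0 < φ₁ ≤ φ₂ ≤ ⋯ ≤ φ₁₀, with φ₁+⋯+φ₁₀ divisible by 3, and with φ₁+⋯+φ₇ ≥ 2(φ₈+φ₉+φ₁₀), there exists L ∈ Λ with ⟨L,L⟩ > 0 and ⟨Eᵢ,L⟩ = φᵢ for all i ∈ {1,…,10}. (This is the lattice core of the converse part of Theorem 1.4: every 10-tuple satisfying conditions (a)–(c) is realized as the vector of intersection numbers of some class of positive square with an isotropic 10-sequence.) -/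

import Mathlib

/-- Gram matrix of the Enriques lattice `U ⊕ E₈(-1)`: the orthogonal direct sum of the
hyperbolic plane and the negative of the E₈ Cartan matrix. -/
def enriquesGram : Matrix (Fin 10) (Fin 10) ℤ :=
  !![0, 1, 0, 0, 0, 0, 0, 0, 0, 0;
     1, 0, 0, 0, 0, 0, 0, 0, 0, 0;
     0, 0, -2, 0, 1, 0, 0, 0, 0, 0;
     0, 0, 0, -2, 0, 1, 0, 0, 0, 0;
     0, 0, 1, 0, -2, 1, 0, 0, 0, 0;
     0, 0, 0, 1, 1, -2, 1, 0, 0, 0;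
     0, 0, 0, 0, 0, 1, -2, 1, 0, 0;
     0, 0, 0, 0, 0, 0, 1, -2, 1, 0;
     0, 0, 0, 0, 0, 0, 0, 1, -2, 1;
     0, 0, 0, 0, 0, 0, 0, 0, 1, -2]

/-- The symmetric bilinear pairing of the Enriques lattice `Λ = ℤ¹⁰`. -/
def epair (x y : Fin 10 → ℤ) : ℤ := ∑ i, ∑ j, x i * enriquesGram i j * y j

/-- An isotropic 10-sequence in the Enriques lattice: `⟨Eᵢ,Eᵢ⟩ = 0` and `⟨Eᵢ,Eⱼ⟩ = 1`
for `i ≠ j`. -/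
def IsIsotropicTenSeq (E : Fin 10 → Fin 10 → ℤ) : Prop :=
  (∀ i, epair (E i) (E i) = 0) ∧ ∀ i j, i ≠ j → epair (E i) (E j) = 1

/-!
Write `Eᵢ` for the isotropic sequence, so that `⟨Eᵢ, Eⱼ⟩ = 1 - δᵢⱼ`. The wanted class is
`L = (∑ φ / 9) ∑ Eⱼ - ∑ φⱼ Eⱼ`, since `⟨Eᵢ, ∑ aⱼ Eⱼ⟩ = ∑ a - aᵢ`; its square is
`(∑ φ / 3)² - ∑ φⱼ²`, positive by an elementary inequality on the `φⱼ`. `L` is integral as soon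
as `∑ Eⱼ` is divisible by 3 in `Λ`. That holds because the Gram matrix `J - I` of the `Eⱼ` is
singular modulo 3 while `Λ` is unimodular: some nontrivial combination of the `Eⱼ` vanishes
modulo 3, and its coefficient vector lies in the kernel of `J - I` over `𝔽₃`, which consists of
the constant vectors.
-/

open Finset Matrix

namespace LinearMap.BilinForm

variable {M ι : Type*} [AddCommGroup M] [Fintype ι] [DecidableEq ι]

def IsIsotropicSeq (β : LinearMap.BilinForm ℤ M) (E : ι → M) : Prop :=
  ∀ i j, β (E i) (E j) = if i = j then 0 else 1

namespace IsIsotropicSeq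

variable {β : LinearMap.BilinForm ℤ M} {E : ι → M}

lemma apply_sum_smul_right (hE : IsIsotropicSeq β E) (a : ι → ℤ) (i : ι) :
    β (E i) (∑ j, a j • E j) = ∑ j, a j - a i := by
  simp only [map_sum, map_smul, hE i, smul_eq_mul, mul_ite, mul_zero, mul_one]
  rw [sum_ite, sum_const_zero, zero_add, filter_ne, sum_erase_eq_sub (mem_univ i)]

lemma apply_sum_smul_sum_smul (hE : IsIsotropicSeq β E) (a : ι → ℤ) :
    β (∑ j, a j • E j) (∑ j, a j • E j) = (∑ j, a j) ^ 2 - ∑ j, a j ^ 2 := by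
  rw [map_sum β, LinearMap.sum_apply]
  simp only [map_smul, LinearMap.smul_apply, hE.apply_sum_smul_right, smul_eq_mul, mul_sub,
    sum_sub_distrib, ← sum_mul, sq]

lemma exists_apply_eq_of_smul_eq_sum (hE : IsIsotropicSeq β E) {m : ℤ} (hm : m ≠ 0)
    (hcard : (Fintype.card ι : ℤ) = m ^ 2 + 1) {D : M} (hD : m • D = ∑ i, E i)
    {φ : ι → ℤ} {c : ℤ} (hc : ∑ i, φ i = m * c) :
    ∃ L, β L L = c ^ 2 - ∑ i, φ i ^ 2 ∧ ∀ i, β (E i) L = φ i := by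
  set L := c • D - ∑ j, φ j • E j
  have hmL : m • L = ∑ j, (c - m * φ j) • E j := by
    simp only [L, smul_sub, smul_comm m c, hD, smul_sum, smul_smul, sub_smul, sum_sub_distrib]
  have hsum : ∑ j, (c - m * φ j) = c := by
    rw [sum_sub_distrib, ← mul_sum, hc, sum_const, card_univ, nsmul_eq_mul, hcard]
    ring
  refine ⟨L, ?_, fun i => ?_⟩
  · have h := hE.apply_sum_smul_sum_smul (fun j => c - m * φ j)
    simp only [← hmL, hsum, map_smul, LinearMap.smul_apply, smul_eq_mul] at h
    have hsq : ∑ j, (c - m * φ j) ^ 2 = c ^ 2 - m ^ 2 * c ^ 2 + m ^ 2 * ∑ j, φ j ^ 2 := by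
      simp only [sub_sq, mul_pow, sum_add_distrib, sum_sub_distrib, ← mul_sum, sum_const,
        card_univ, nsmul_eq_mul, hcard, hc]
      ring
    refine mul_left_cancel₀ (pow_ne_zero 2 hm) ?_
    linear_combination h - hsq
  · have h := hE.apply_sum_smul_right (fun j => c - m * φ j) i
    rw [← hmL, hsum, map_smul, smul_eq_mul] at h
    exact mul_left_cancel₀ hm (by linarith)

end IsIsotropicSeq

end LinearMap.BilinForm

namespace Matrix

lemma mul_mul_transpose_apply {R n : Type*} [CommRing R] [Fintype n] [DecidableEq n]
    (X G : Matrix n n R) (i j : n) : (X * G * Xᵀ) i j = toBilin' G (X i) (X j) := by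
  simp only [toBilin'_apply, mul_apply, transpose_apply, sum_mul]
  exact sum_comm

lemma sum_apply_eq_zero_of_mul_mul_transpose_eq {F n : Type*} [Field F] [Fintype n]
    [DecidableEq n] {B G : Matrix n n F} (hG : G.det ≠ 0) (hcard : (Fintype.card n : F) = 1)
    (hBGB : B * G * Bᵀ = of fun i j => if i = j then 0 else 1) (k : n) :
    ∑ i, B i k = 0 := by
  have hBGB_mulVec (v : n → F) (j : n) : ((B * G * Bᵀ) *ᵥ v) j = ∑ i, v i - v j := by
    simp only [hBGB, mulVec, dotProduct, of_apply, ite_mul, zero_mul, one_mul]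
    rw [sum_ite, sum_const_zero, zero_add, filter_ne, sum_erase_eq_sub (mem_univ j)]
  have : Nonempty n :=
    Fintype.card_pos_iff.mp <| Nat.pos_of_ne_zero fun h => by simp [h] at hcard
  have hBGB_det : (B * G * Bᵀ).det = 0 := by
    refine exists_mulVec_eq_zero_iff.mp ⟨fun _ => 1, one_ne_zero, funext fun j => ?_⟩
    simp [hBGB_mulVec, hcard]
  obtain ⟨v, hv0, hv⟩ : ∃ v ≠ 0, Bᵀ *ᵥ v = 0 := by
    refine exists_mulVec_eq_zero_iff.mpr ?_
    simpa [det_transpose, hG] using hBGB_det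
  have hconst (j : n) : v j = ∑ i, v i := by
    have := hBGB_mulVec v j
    rw [← mulVec_mulVec, ← mulVec_mulVec, hv, mulVec_zero, mulVec_zero] at this
    exact (sub_eq_zero.mp this.symm).symm
  have hsum : ∑ i, v i ≠ 0 := fun h => hv0 (funext fun j => (hconst j).trans h)
  have hk : (∑ i, B i k) * ∑ j, v j = (Bᵀ *ᵥ v) k := by
    rw [sum_mul]
    exact sum_congr rfl fun i _ => by rw [← hconst i]; rfl
  rwa [hv, Pi.zero_apply, mul_eq_zero, or_iff_left hsum] at hk

end Matrix

lemma nine_mul_sum_sq_lt_sq_sum {φ : Fin 10 → ℤ} (hpos : 0 < φ 0) (hmono : Monotone φ)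
    (hineq : φ 0 + φ 1 + φ 2 + φ 3 + φ 4 + φ 5 + φ 6 ≥ 2 * (φ 7 + φ 8 + φ 9)) :
    9 * ∑ i, φ i ^ 2 < (∑ i, φ i) ^ 2 := by
  simp only [Fin.sum_univ_succ, Fin.sum_univ_zero, Fin.reduceSucc, add_zero]
  -- With `X = φ₀ + ⋯ + φ₆ - 2 (φ₇ + φ₈ + φ₉) ≥ 0`, the difference of the two sides is
  -- `9 ∑_{i<7} φᵢ (φ₇ - φᵢ) + 18 φ₇ (φ₈ + φ₉ - 2 φ₇) + 18 (φ₈ - φ₇) (φ₉ - φ₇)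
  --   + 3 X (2 φ₈ + 2 φ₉ - φ₇) + X²`.
  have h (i j : Fin 10) (hij : i ≤ j := by decide) : φ i ≤ φ j := hmono hij
  nlinarith [h 0 1, h 1 2, h 2 3, h 3 4, h 4 5, h 5 6, h 6 7, h 7 8, h 8 9]

def enriquesGramInv : Matrix (Fin 10) (Fin 10) ℤ :=
  !![0, 1, 0, 0, 0, 0, 0, 0, 0, 0;
     1, 0, 0, 0, 0, 0, 0, 0, 0, 0;
     0, 0, -4, -5, -7, -10, -8, -6, -4, -2;
     0, 0, -5, -8, -10, -15, -12, -9, -6, -3;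
     0, 0, -7, -10, -14, -20, -16, -12, -8, -4;
     0, 0, -10, -15, -20, -30, -24, -18, -12, -6;
     0, 0, -8, -12, -16, -24, -20, -15, -10, -5;
     0, 0, -6, -9, -12, -18, -15, -12, -8, -4;
     0, 0, -4, -6, -8, -12, -10, -8, -6, -3;
     0, 0, -2, -3, -4, -6, -5, -4, -3, -2]

lemma enriquesGram_mul_enriquesGramInv : enriquesGram * enriquesGramInv = 1 := by decide

lemma epair_eq_toBilin' (x y : Fin 10 → ℤ) : epair x y = toBilin' enriquesGram x y :=
  (toBilin'_apply _ x y).symm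

namespace IsIsotropicTenSeq

variable {E : Fin 10 → Fin 10 → ℤ}

lemma isIsotropicSeq (hE : IsIsotropicTenSeq E) :
    LinearMap.BilinForm.IsIsotropicSeq (toBilin' enriquesGram) E := by
  intro i j
  rw [← epair_eq_toBilin']
  split_ifs with h
  · exact h ▸ hE.1 i
  · exact hE.2 i j h

lemma exists_three_smul_eq_sum (hE : IsIsotropicTenSeq E) :
    ∃ D : Fin 10 → ℤ, (3 : ℤ) • D = ∑ i, E i := by
  let f := (Int.castRingHom (ZMod 3)).mapMatrix (m := Fin 10)
  have hG : (f enriquesGram).det ≠ 0 :=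
    det_ne_zero_of_right_inverse (B := f enriquesGramInv) <| by
      rw [← map_mul, enriquesGram_mul_enriquesGramInv, map_one]
  have hGram : of E * enriquesGram * (of E)ᵀ = of fun i j => if i = j then 0 else 1 := by
    ext i j
    exact (mul_mul_transpose_apply _ _ i j).trans (hE.isIsotropicSeq i j)
  have hGram₃ : f (of E) * f enriquesGram * (f (of E))ᵀ =
      of fun i j => if i = j then 0 else 1 := by
    rw [show (f (of E))ᵀ = f (of E)ᵀ from transpose_map.symm, ← map_mul, ← map_mul, hGram]
    ext i j
    simp [f, apply_ite]
  have h3 (k : Fin 10) : (3 : ℤ) ∣ ∑ i, E i k := by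
    have := sum_apply_eq_zero_of_mul_mul_transpose_eq hG rfl hGram₃ k
    simp only [f, RingHom.mapMatrix_apply, map_apply, of_apply, eq_intCast] at this
    exact (ZMod.intCast_zmod_eq_zero_iff_dvd _ 3).1 (by push_cast; exact this)
  choose D hD using h3
  exact ⟨D, funext fun k => by simp [hD k]⟩

end IsIsotropicTenSeq

/-- Any 10-tuple of integers `0 < φ₁ ≤ ⋯ ≤ φ₁₀` whose sum is divisible by 3 and with
`φ₁+⋯+φ₇ ≥ 2(φ₈+φ₉+φ₁₀)` is realized as the vector of intersection numbers of some
class `L` of positive square with a given isotropic 10-sequence. -/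
theorem exists_class_with_prescribed_phi_vector
    (E : Fin 10 → Fin 10 → ℤ) (hE : IsIsotropicTenSeq E)
    (φ : Fin 10 → ℤ) (hpos : 0 < φ 0) (hmono : Monotone φ)
    (hdvd : (3 : ℤ) ∣ ∑ i, φ i)
    (hineq : φ 0 + φ 1 + φ 2 + φ 3 + φ 4 + φ 5 + φ 6 ≥ 2 * (φ 7 + φ 8 + φ 9)) :
    ∃ L : Fin 10 → ℤ, 0 < epair L L ∧ ∀ i, epair (E i) L = φ i := by
  obtain ⟨D, hD⟩ := hE.exists_three_smul_eq_sum
  obtain ⟨c, hc⟩ := hdvd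
  obtain ⟨L, hLL, hEL⟩ :=
    hE.isIsotropicSeq.exists_apply_eq_of_smul_eq_sum (by norm_num) (by simp) hD hc
  refine ⟨L, ?_, fun i => (epair_eq_toBilin' _ _).trans (hEL i)⟩
  have hsq := nine_mul_sum_sq_lt_sq_sum hpos hmono hineq
  rw [hc] at hsq
  rw [epair_eq_toBilin', hLL]
  linarith
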